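/- Let R be an R-matrix on V⊗V, V = ℂ^N, let A be an associative unital ℂ-algebra, let x₁,…,x_N ∈ A, let L ∈ Mat_N(A), and let η ∈ ℂ∖{0}. Assume the operator-function permutation relation R₁L₁R₁x₁ = η·x₁L₂ holds, i.e., componentwise Σ_{a,b,c,d} R_{i₁i₂}^{ab} L_a^c R_{cb}^{dl} x_d = η·x_{i₁} L_{i₂}^l for all i₁,i₂,l. Then for every p ≥ 1 the iterated relation holds: for all indices i₁,…,i_p, j, l, Σ_{k₁,…,k_p} [R_{p→1} L₁ R_{1→p}]_{(i₁,…,i_p,j)}^{(k₁,…,k_p,l)} · x_{k₁}x_{k₂}⋯x_{k_p} = η^p · x_{i₁}x_{i₂}⋯x_{i_p} · L_j^l, where R_{1→p} = R₁R₂⋯R_p and R_{p→1} = R_pR_{p−1}⋯R₁ in Mat_{N^{p+1}}(A). -/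

import Mathlib

/-!
Write `T_p = R_{p→1} L₁ R_{1→p}` on `V^{⊗(p+1)}` (so `T₀ = L`). Peeling off the outermost
factors gives `T_{p+1} = R_{p+1} (T_p ⊗ 1) R_{p+1}`. By induction, contracting the first `p`
output indices of `T_p` against `x_{k₁}⋯x_{k_p}` yields `η^p x_{i₁}⋯x_{i_p} L`; substituting this
into `T_{p+1}` leaves, in the last slots, precisely the left side of the permutation relation
(the entries of `R` are scalars, hence central), which contributes one more factor
`η x_{i_{p+1}}`.
-/

open Matrix BigOperators

/-- `X₁ = X ⊗ id` acting on the factors 1,2 of `(ℂ^N)^{⊗3}`. -/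
noncomputable def up12 {N : ℕ} (X : Matrix (Fin N × Fin N) (Fin N × Fin N) ℂ) :
    Matrix (Fin N × Fin N × Fin N) (Fin N × Fin N × Fin N) ℂ :=
  Matrix.of fun p q => X (p.1, p.2.1) (q.1, q.2.1) * (if p.2.2 = q.2.2 then 1 else 0)

/-- `X₂ = id ⊗ X` acting on the factors 2,3 of `(ℂ^N)^{⊗3}`. -/
noncomputable def up23 {N : ℕ} (X : Matrix (Fin N × Fin N) (Fin N × Fin N) ℂ) :
    Matrix (Fin N × Fin N × Fin N) (Fin N × Fin N × Fin N) ℂ :=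
  Matrix.of fun p q => (if p.1 = q.1 then 1 else 0) * X (p.2.1, p.2.2) (q.2.1, q.2.2)

/-- A matrix `X ∈ Mat_N(A)` placed in the (0-indexed) tensor factor `p`
of `V^{⊗k}`, acting as the identity elsewhere. -/
def liftV {N : ℕ} {A : Type} [Ring A] (k : ℕ) (X : Matrix (Fin N) (Fin N) A)
    (p : ℕ) : Matrix (Fin k → Fin N) (Fin k → Fin N) A :=
  Matrix.of fun v w =>
    if h : p < k then
      X (v ⟨p, h⟩) (w ⟨p, h⟩) *
        (if ∀ j : Fin k, (j : ℕ) ≠ p → v j = w j then 1 else 0)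
    else (if v = w then 1 else 0)

/-- A matrix `X ∈ Mat_{N²}(A)` placed in the (0-indexed) tensor factors
`p, p+1` of `V^{⊗k}`; this is the operator `X_{p+1}` in 1-indexed notation. -/
def lift2 {N : ℕ} {A : Type} [Ring A] (k : ℕ)
    (X : Matrix (Fin N × Fin N) (Fin N × Fin N) A) (p : ℕ) :
    Matrix (Fin k → Fin N) (Fin k → Fin N) A :=
  Matrix.of fun v w =>
    if h : p + 1 < k then
      X (v ⟨p, Nat.lt_of_succ_lt h⟩, v ⟨p + 1, h⟩)
          (w ⟨p, Nat.lt_of_succ_lt h⟩, w ⟨p + 1, h⟩) *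
        (if ∀ j : Fin k, (j : ℕ) ≠ p → (j : ℕ) ≠ p + 1 → v j = w j then 1 else 0)
    else (if v = w then 1 else 0)

/-- The ascending product `R_{1→(n+1)} = R₁R₂⋯R_{n+1}` in `Mat_{N^k}(A)`
(0-indexed: `RupProd k RA n = R₁⋯R_{n+1}`). -/
def RupProd {N : ℕ} {A : Type} [Ring A] (k : ℕ)
    (RA : Matrix (Fin N × Fin N) (Fin N × Fin N) A) :
    ℕ → Matrix (Fin k → Fin N) (Fin k → Fin N) A
  | 0 => lift2 k RA 0
  | n + 1 => RupProd k RA n * lift2 k RA (n + 1)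

/-- The descending product `R_{(n+1)→1} = R_{n+1}R_n⋯R₁` in `Mat_{N^k}(A)`. -/
def RdownProd {N : ℕ} {A : Type} [Ring A] (k : ℕ)
    (RA : Matrix (Fin N × Fin N) (Fin N × Fin N) A) :
    ℕ → Matrix (Fin k → Fin N) (Fin k → Fin N) A
  | 0 => lift2 k RA 0
  | n + 1 => lift2 k RA (n + 1) * RdownProd k RA n


section TensorId

variable {N : ℕ} {A : Type} [Ring A]

theorem Fintype.sum_fin_snoc {β : Type*} [AddCommMonoid β] {m : ℕ}
    (f : (Fin (m + 1) → Fin N) → β) :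
    ∑ g, f g = ∑ d : Fin N, ∑ g : Fin m → Fin N, f (Fin.snoc g d) := by
  rw [← (Fin.snocEquiv fun _ => Fin N).sum_comp, Fintype.sum_prod_type]
  rfl

def tensorId {k : ℕ} (M : Matrix (Fin k → Fin N) (Fin k → Fin N) A) :
    Matrix (Fin (k + 1) → Fin N) (Fin (k + 1) → Fin N) A :=
  Matrix.of fun v w => M (Fin.init v) (Fin.init w) *
    if v (Fin.last k) = w (Fin.last k) then 1 else 0

@[simp]
theorem tensorId_apply_snoc {k : ℕ} (M : Matrix (Fin k → Fin N) (Fin k → Fin N) A)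
    (v w : Fin k → Fin N) (a b : Fin N) :
    tensorId M (Fin.snoc v a) (Fin.snoc w b) = M v w * if a = b then 1 else 0 := by
  simp [tensorId]

theorem tensorId_mul {k : ℕ} (M M' : Matrix (Fin k → Fin N) (Fin k → Fin N) A) :
    tensorId (M * M') = tensorId M * tensorId M' := by
  ext v w
  simp only [tensorId, of_apply, mul_apply, Fintype.sum_fin_snoc, Fin.init_snoc,
    Fin.snoc_last, mul_ite, mul_one, mul_zero]
  simp [Finset.sum_ite_irrel]

theorem tensorId_lift2 {k p : ℕ} (hp : p + 1 < k) (X : Matrix (Fin N × Fin N) (Fin N × Fin N) A) :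
    tensorId (lift2 k X p) = lift2 (k + 1) X p := by
  ext v w
  simp only [tensorId, lift2, of_apply, dif_pos hp, dif_pos (show p + 1 < k + 1 by omega),
    mul_assoc, ite_zero_mul_ite_zero, mul_one]
  congr 2
  have : k ≠ p ∧ k ≠ p + 1 := by omega
  simp [Fin.forall_fin_succ' (n := k), Fin.init, this, and_comm]

theorem tensorId_liftV {k q : ℕ} (hq : q < k) (X : Matrix (Fin N) (Fin N) A) :
    tensorId (liftV k X q) = liftV (k + 1) X q := by
  ext v w
  simp only [tensorId, liftV, of_apply, dif_pos hq, dif_pos (show q < k + 1 by omega),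
    mul_assoc, ite_zero_mul_ite_zero, mul_one]
  congr 2
  simp [Fin.forall_fin_succ' (n := k), Fin.init, hq.ne', and_comm]

theorem tensorId_RdownProd {k n : ℕ} (hn : n + 1 < k)
    (X : Matrix (Fin N × Fin N) (Fin N × Fin N) A) :
    tensorId (RdownProd k X n) = RdownProd (k + 1) X n := by
  induction n with
  | zero => exact tensorId_lift2 hn X
  | succ n ih => rw [RdownProd, RdownProd, tensorId_mul, tensorId_lift2 hn, ih (by omega)]

theorem tensorId_RupProd {k n : ℕ} (hn : n + 1 < k)
    (X : Matrix (Fin N × Fin N) (Fin N × Fin N) A) :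
    tensorId (RupProd k X n) = RupProd (k + 1) X n := by
  induction n with
  | zero => exact tensorId_lift2 hn X
  | succ n ih => rw [RupProd, RupProd, tensorId_mul, tensorId_lift2 hn, ih (by omega)]

end TensorId

section Dressing

variable {N : ℕ} {A : Type} [Ring A] (X : Matrix (Fin N × Fin N) (Fin N × Fin N) A)
  (L : Matrix (Fin N) (Fin N) A)

def dressed : (m : ℕ) → Matrix (Fin (m + 1) → Fin N) (Fin (m + 1) → Fin N) A
  | 0 => liftV 1 L 0
  | m + 1 => lift2 (m + 2) X m * tensorId (dressed m) * lift2 (m + 2) X m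

theorem dressed_succ_eq (m : ℕ) :
    dressed X L (m + 1) = RdownProd (m + 2) X m * liftV (m + 2) L 0 * RupProd (m + 2) X m := by
  induction m with
  | zero => rw [dressed, dressed, tensorId_liftV one_pos]; rfl
  | succ m ih =>
    rw [dressed, ih, tensorId_mul, tensorId_mul, tensorId_RdownProd (by omega),
      tensorId_RupProd (by omega), tensorId_liftV (by omega), RdownProd, RupProd]
    simp only [mul_assoc]

end Dressing

section Entries

variable {N : ℕ} {A : Type} [Ring A]

theorem lift2_apply_snoc_snoc {m : ℕ} (X : Matrix (Fin N × Fin N) (Fin N × Fin N) A)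
    (v w : Fin m → Fin N) (a b c d : Fin N) :
    lift2 (m + 2) X m (Fin.snoc (Fin.snoc v a) b) (Fin.snoc (Fin.snoc w c) d)
      = X (a, b) (c, d) * if v = w then 1 else 0 := by
  have hm : m + 1 < m + 2 := by omega
  simp only [lift2, of_apply, dif_pos hm]
  congr 1
  · exact congrArg₂ X (by simp [Fin.snoc]) (by simp [Fin.snoc])
  · have hne (i : Fin m) : (i : ℕ) ≠ m ∧ (i : ℕ) ≠ m + 1 := by omega
    simp [Fin.forall_fin_succ', funext_iff, hne]

theorem liftV_one_apply (X : Matrix (Fin N) (Fin N) A) (v w : Fin 1 → Fin N) :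
    liftV 1 X 0 v w = X (v 0) (w 0) := by
  simp [liftV]

theorem lift2_mul_tensorId_mul_lift2_apply {m : ℕ} (X : Matrix (Fin N × Fin N) (Fin N × Fin N) A)
    (M : Matrix (Fin (m + 1) → Fin N) (Fin (m + 1) → Fin N) A) (v w : Fin m → Fin N)
    (a' j d l : Fin N) :
    (lift2 (m + 2) X m * tensorId M * lift2 (m + 2) X m)
        (Fin.snoc (Fin.snoc v a') j) (Fin.snoc (Fin.snoc w d) l)
      = ∑ b, ∑ c, (∑ a, X (a', j) (a, b) * M (Fin.snoc v a) (Fin.snoc w c)) * X (c, b) (d, l) := by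
  simp only [mul_apply, Fintype.sum_fin_snoc, lift2_apply_snoc_snoc, tensorId_apply_snoc,
    mul_ite, ite_mul, mul_one, mul_zero, zero_mul, Finset.sum_ite_eq, Finset.sum_ite_eq',
    Finset.mem_univ, if_true, Finset.sum_ite_irrel, Finset.sum_const_zero]

end Entries

theorem algebraMap_mul_mul_algebraMap_mul {R A : Type*} [CommSemiring R] [Semiring A]
    [Algebra R A] (r s : R) (u w : A) :
    algebraMap R A r * u * algebraMap R A s * w = (r * s) • (u * w) := by
  rw [mul_assoc _ u, ← Algebra.commutes, ← mul_assoc, ← map_mul, mul_assoc, Algebra.smul_def]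

theorem List.prod_ofFn_snoc {M α : Type*} [Monoid M] (f : α → M) {m : ℕ} (g : Fin m → α) (d : α) :
    (List.ofFn fun t : Fin (m + 1) => f ((Fin.snoc g d : Fin (m + 1) → α) t)).prod
      = (List.ofFn fun t : Fin m => f (g t)).prod * f d := by
  rw [List.ofFn_succ', List.prod_concat]
  simp

section PermutationRelation

variable {N : ℕ} {A : Type} [Ring A] [Algebra ℂ A]

/-- The operator-function permutation relation `R₁L₁R₁x₁ = η·x₁L₂`, componentwise. -/
def OFPRelation (R : Matrix (Fin N × Fin N) (Fin N × Fin N) ℂ) (L : Matrix (Fin N) (Fin N) A)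
    (x : Fin N → A) (η : ℂ) : Prop :=
  ∀ i₁ i₂ l : Fin N, ∑ a, ∑ b, ∑ c, ∑ d, (R (i₁, i₂) (a, b) * R (c, b) (d, l)) • (L a c * x d)
    = η • (x i₁ * L i₂ l)

variable {R : Matrix (Fin N × Fin N) (Fin N × Fin N) ℂ} {L : Matrix (Fin N) (Fin N) A}
  {x : Fin N → A} {η : ℂ}

theorem ofpRelation_iff :
    OFPRelation R L x η ↔ ∀ i₁ i₂ l : Fin N,
      ∑ a, ∑ b, ∑ c, ∑ d, algebraMap ℂ A (R (i₁, i₂) (a, b)) * L a c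
          * algebraMap ℂ A (R (c, b) (d, l)) * x d
        = algebraMap ℂ A η * (x i₁ * L i₂ l) := by
  simp only [OFPRelation, algebraMap_mul_mul_algebraMap_mul, Algebra.smul_def η]

theorem OFPRelation.sum_apply_mul {m : ℕ} (hR : OFPRelation R L x η)
    (M : Matrix (Fin (m + 1) → Fin N) (Fin (m + 1) → Fin N) A) (P : (Fin m → Fin N) → A) (Y : A)
    (v : Fin m → Fin N) (hM : ∀ a c, ∑ w, M (Fin.snoc v a) (Fin.snoc w c) * P w = Y * L a c)
    (a' j l : Fin N) :
    ∑ d, ∑ w, (lift2 (m + 2) (R.map (algebraMap ℂ A)) m * tensorId M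
          * lift2 (m + 2) (R.map (algebraMap ℂ A)) m)
        (Fin.snoc (Fin.snoc v a') j) (Fin.snoc (Fin.snoc w d) l) * (P w * x d)
      = η • (Y * (x a' * L j l)) := by
  calc _ = ∑ d, ∑ b, ∑ c, ∑ a, (R (a', j) (a, b) * R (c, b) (d, l))
          • ((∑ w, M (Fin.snoc v a) (Fin.snoc w c) * P w) * x d) := by
        simp only [lift2_mul_tensorId_mul_lift2_apply, map_apply, Finset.sum_mul]
        simp only [algebraMap_mul_mul_algebraMap_mul]
        simp only [Finset.smul_sum, mul_assoc]
        simp only [Finset.sum_comm (γ := Fin m → Fin N)]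
    _ = Y * ∑ d, ∑ b, ∑ c, ∑ a, (R (a', j) (a, b) * R (c, b) (d, l)) • (L a c * x d) := by
        simp only [hM, mul_assoc, mul_smul_comm, Finset.mul_sum]
    _ = Y * ∑ a, ∑ b, ∑ c, ∑ d, (R (a', j) (a, b) * R (c, b) (d, l)) • (L a c * x d) := by
        congr 1
        refine (Finset.sum_congr rfl fun d _ => Finset.sum_comm_cycle).trans ?_
        rw [Finset.sum_comm]; refine Finset.sum_congr rfl fun a _ => ?_
        rw [Finset.sum_comm]; exact Finset.sum_congr rfl fun b _ => Finset.sum_comm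
    _ = η • (Y * (x a' * L j l)) := by rw [hR, mul_smul_comm]

theorem OFPRelation.sum_dressed_apply_mul_prod (hR : OFPRelation R L x η) (m : ℕ)
    (i : Fin m → Fin N) (j l : Fin N) :
    ∑ k : Fin m → Fin N, dressed (R.map (algebraMap ℂ A)) L m (Fin.snoc i j) (Fin.snoc k l)
        * (List.ofFn fun t => x (k t)).prod
      = η ^ m • ((List.ofFn fun t => x (i t)).prod * L j l) := by
  induction m generalizing j l with
  | zero => simp [dressed, liftV_one_apply]; rfl
  | succ m ih =>
    rw [← Fin.snoc_init_self i, Fintype.sum_fin_snoc]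
    simp only [dressed, List.prod_ofFn_snoc]
    have hM (a c : Fin N) := (ih (Fin.init i) a c).trans (smul_mul_assoc _ _ _).symm
    rw [hR.sum_apply_mul _ _ _ _ hM, smul_mul_assoc, smul_smul, ← pow_succ', mul_assoc]

end PermutationRelation

theorem ofp_iterated_general (N : ℕ)
    (R : Matrix (Fin N × Fin N) (Fin N × Fin N) ℂ)
    (A : Type) [Ring A] [Algebra ℂ A]
    (x : Fin N → A) (L : Matrix (Fin N) (Fin N) A) (η : ℂ)
    (hOFP : ∀ i₁ i₂ l : Fin N,
      ∑ a : Fin N, ∑ b : Fin N, ∑ c : Fin N, ∑ d : Fin N,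
          algebraMap ℂ A (R (i₁, i₂) (a, b)) * L a c
            * algebraMap ℂ A (R (c, b) (d, l)) * x d
        = algebraMap ℂ A η * (x i₁ * L i₂ l)) :
    ∀ p : ℕ, 1 ≤ p → ∀ (i : Fin p → Fin N) (j l : Fin N),
      ∑ kk : Fin p → Fin N,
          (RdownProd (p + 1) (R.map (algebraMap ℂ A)) (p - 1)
              * liftV (p + 1) L 0
              * RupProd (p + 1) (R.map (algebraMap ℂ A)) (p - 1))
            (Fin.snoc i j) (Fin.snoc kk l)
            * (List.ofFn fun t : Fin p => x (kk t)).prod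
        = algebraMap ℂ A (η ^ p)
            * ((List.ofFn fun t : Fin p => x (i t)).prod * L j l) := by
  rintro (_ | m) hp i j l
  · omega
  rw [Nat.add_sub_cancel, ← dressed_succ_eq, ← Algebra.smul_def]
  exact (ofpRelation_iff.mpr hOFP).sum_dressed_apply_mul_prod (m + 1) i j l

/-- If the operator-function permutation relation `R₁L₁R₁x₁ = η·x₁L₂` holds
componentwise, then for every `p ≥ 1` the iterated relation holds:
`Σ_k [R_{p→1} L₁ R_{1→p}]_{(i,j)}^{(k,l)} x_{k₁}⋯x_{k_p} = η^p x_{i₁}⋯x_{i_p} L_j^l`. -/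
theorem ofp_iterated (N : ℕ) (hN : 1 ≤ N)
    (R Rinv : Matrix (Fin N × Fin N) (Fin N × Fin N) ℂ)
    (hYB : up12 R * up23 R * up12 R = up23 R * up12 R * up23 R)
    (hRinv : R * Rinv = 1 ∧ Rinv * R = 1)
    (A : Type) [Ring A] [Algebra ℂ A]
    (x : Fin N → A) (L : Matrix (Fin N) (Fin N) A) (η : ℂ) (hη : η ≠ 0)
    (hOFP : ∀ i₁ i₂ l : Fin N,
      ∑ a : Fin N, ∑ b : Fin N, ∑ c : Fin N, ∑ d : Fin N,
          algebraMap ℂ A (R (i₁, i₂) (a, b)) * L a c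
            * algebraMap ℂ A (R (c, b) (d, l)) * x d
        = algebraMap ℂ A η * (x i₁ * L i₂ l)) :
    ∀ p : ℕ, 1 ≤ p → ∀ (i : Fin p → Fin N) (j l : Fin N),
      ∑ kk : Fin p → Fin N,
          (RdownProd (p + 1) (R.map (algebraMap ℂ A)) (p - 1)
              * liftV (p + 1) L 0
              * RupProd (p + 1) (R.map (algebraMap ℂ A)) (p - 1))
            (Fin.snoc i j) (Fin.snoc kk l)
            * (List.ofFn fun t : Fin p => x (kk t)).prod
        = algebraMap ℂ A (η ^ p)
            * ((List.ofFn fun t : Fin p => x (i t)).prod * L j l) :=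
  ofp_iterated_general N R A x L η hOFP
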